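/- π² = 36·Li₂(1/2) − 36·Li₂(1/4) − 12·Li₂(1/8) + 6·Li₂(1/64). -/

import Mathlib

noncomputable def Li2 (z : ℝ) : ℝ := ∑' n : ℕ, z ^ (n + 1) / ((n : ℝ) + 1) ^ 2

/-! Two functional equations of `Li₂` do the work: `Li₂ (x²) = 2 (Li₂ x + Li₂ (-x))`, since odd
powers cancel in `Li₂ x + Li₂ (-x)`, and Landen's identity
`Li₂ x + Li₂ (x / (x - 1)) = -log² (1 - x) / 2`, whose left side has derivative zero because
`x Li₂' x = -log (1 - x)`. They give linear relations among the values of `Li₂` at `±1, ±1/2, ±1/3,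
1/4, 1/8, 1/9, 1/64` and `log² 2, log 2 log 3, log² 3`; with `Li₂ 1 = ζ(2) = π² / 6` these can be
solved for `π²`, all logarithms cancelling. -/

open Real Set

theorem summable_one_div_succ_sq : Summable (fun n : ℕ => 1 / ((n : ℝ) + 1) ^ 2) := by
  simpa using (summable_nat_add_iff 1).mpr (Real.summable_one_div_nat_pow.mpr one_lt_two)

theorem norm_Li2_term_le {x : ℝ} (h : |x| ≤ 1) (n : ℕ) :
    ‖x ^ (n + 1) / ((n : ℝ) + 1) ^ 2‖ ≤ 1 / ((n : ℝ) + 1) ^ 2 := by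
  rw [norm_div, norm_pow, Real.norm_eq_abs, norm_of_nonneg (by positivity)]
  gcongr
  exact pow_le_one₀ (abs_nonneg x) h

theorem hasSum_Li2 {x : ℝ} (h : |x| ≤ 1) :
    HasSum (fun n : ℕ => x ^ (n + 1) / ((n : ℝ) + 1) ^ 2) (Li2 x) :=
  (summable_one_div_succ_sq.of_norm_bounded (norm_Li2_term_le h)).hasSum

theorem Li2_zero : Li2 0 = 0 := by
  simp [Li2]

theorem Li2_one : Li2 1 = π ^ 2 / 6 := by
  refine (hasSum_Li2 (by norm_num)).unique ?_
  simpa using (hasSum_nat_add_iff' 1).mpr hasSum_zeta_two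

theorem continuousOn_Li2 : ContinuousOn Li2 (Icc (-1) 1) :=
  continuousOn_tsum (fun _ => (continuousOn_pow _).div_const _) summable_one_div_succ_sq
    fun n _ hx => norm_Li2_term_le (abs_le.mpr hx) n

theorem Li2_sq {x : ℝ} (h : |x| ≤ 1) : Li2 (x ^ 2) = 2 * (Li2 x + Li2 (-x)) := by
  have hx2 : |x ^ 2| ≤ 1 := by rw [abs_pow]; exact pow_le_one₀ (abs_nonneg x) h
  have hsum : HasSum
      (fun n : ℕ => x ^ (n + 1) / ((n : ℝ) + 1) ^ 2 + (-x) ^ (n + 1) / ((n : ℝ) + 1) ^ 2)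
      (0 + Li2 (x ^ 2) / 2) := by
    refine HasSum.even_add_odd ?_ ?_
    · exact hasSum_zero.congr_fun fun k => by rw [Odd.neg_pow ⟨k, rfl⟩]; ring
    · refine ((hasSum_Li2 hx2).div_const 2).congr_fun fun k => ?_
      rw [Even.neg_pow ⟨k + 1, by ring⟩, show 2 * k + 1 + 1 = 2 * (k + 1) by ring, pow_mul]
      push_cast
      field_simp
      ring
  linarith [((hasSum_Li2 h).add (hasSum_Li2 ((abs_neg x).symm ▸ h))).unique hsum]

theorem Li2_neg_one : Li2 (-1) = -(π ^ 2 / 12) := by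
  have := Li2_sq (x := 1) (by norm_num)
  rw [one_pow, Li2_one] at this
  linarith

theorem hasDerivAt_Li2_tsum {x : ℝ} (h : |x| < 1) :
    HasDerivAt Li2 (∑' n : ℕ, x ^ n / ((n : ℝ) + 1)) x := by
  obtain ⟨r, hxr, hr1⟩ := exists_between h
  have hr0 : 0 < r := (abs_nonneg x).trans_lt hxr
  refine hasDerivAt_tsum_of_isPreconnected
    (g := fun (n : ℕ) (z : ℝ) => z ^ (n + 1) / ((n : ℝ) + 1) ^ 2)
    (g' := fun (n : ℕ) (y : ℝ) => y ^ n / ((n : ℝ) + 1)) (t := Metric.ball 0 r) (y₀ := 0)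
    (summable_geometric_of_lt_one hr0.le hr1) Metric.isOpen_ball
    (convex_ball 0 r).isPreconnected (fun n y _ => ?_) (fun n y hy => ?_)
    (Metric.mem_ball_self hr0) (by simp) (by simpa using hxr)
  · refine ((hasDerivAt_pow (n + 1) y).div_const (((n : ℝ) + 1) ^ 2)).congr_deriv ?_
    rw [Nat.add_sub_cancel]
    push_cast
    field_simp
  · rw [mem_ball_zero_iff, Real.norm_eq_abs] at hy
    rw [norm_div, norm_pow, Real.norm_eq_abs, norm_of_nonneg (by positivity)]
    calc |y| ^ n / ((n : ℝ) + 1) ≤ |y| ^ n :=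
          div_le_self (by positivity) (le_add_of_nonneg_left n.cast_nonneg)
      _ ≤ r ^ n := by gcongr

theorem hasDerivAt_Li2 {x : ℝ} (hx : x ≠ 0) (h : |x| < 1) :
    HasDerivAt Li2 (-log (1 - x) / x) x := by
  convert hasDerivAt_Li2_tsum h using 1
  rw [div_eq_iff hx, ← (Real.hasSum_pow_div_log_of_abs_lt_one h).tsum_eq, ← tsum_mul_right]
  congr 1 with n
  ring

theorem div_sub_one_mem_Icc {y : ℝ} (h0 : 0 ≤ y) (h1 : y ≤ 1 / 2) : y / (y - 1) ∈ Icc (-1) 0 := by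
  have hy : y - 1 < 0 := by linarith
  exact ⟨by rw [le_div_iff_of_neg hy]; linarith, div_nonpos_of_nonneg_of_nonpos h0 hy.le⟩

theorem continuousOn_landen :
    ContinuousOn (fun y => Li2 y + Li2 (y / (y - 1)) + log (1 - y) ^ 2 / 2) (Icc 0 (1 / 2)) := by
  have hsub : Icc (0 : ℝ) (1 / 2) ⊆ Icc (-1) 1 := Icc_subset_Icc (by norm_num) (by norm_num)
  have hquot : ContinuousOn (fun y : ℝ => y / (y - 1)) (Icc 0 (1 / 2)) :=
    continuousOn_id.div (continuousOn_id.sub continuousOn_const) fun y hy =>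
      (show y - 1 < 0 by linarith [hy.2]).ne
  refine ((continuousOn_Li2.mono hsub).add (continuousOn_Li2.comp hquot fun y hy => ?_)).add
    ((((continuousOn_const.sub continuousOn_id).log fun y hy => ?_).pow 2).div_const 2)
  · exact Icc_subset_Icc le_rfl zero_le_one (div_sub_one_mem_Icc hy.1 hy.2)
  · exact (show 0 < 1 - y by linarith [hy.2]).ne'

theorem hasDerivAt_landen {y : ℝ} (h0 : 0 < y) (h1 : y < 1 / 2) :
    HasDerivAt (fun y => Li2 y + Li2 (y / (y - 1)) + log (1 - y) ^ 2 / 2) 0 y := by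
  have hy : y - 1 < 0 := by linarith
  have hy1 : y - 1 ≠ 0 := hy.ne
  have hq0 : y / (y - 1) ≠ 0 := div_ne_zero h0.ne' hy1
  have hq : |y / (y - 1)| < 1 := by
    rw [abs_lt, lt_div_iff_of_neg hy, div_lt_iff_of_neg hy]
    constructor <;> linarith
  have h1y : 1 - y ≠ 0 := by linarith
  have hlog : log (1 - y / (y - 1)) = -log (1 - y) := by
    rw [show 1 - y / (y - 1) = (1 - y)⁻¹ by field_simp; ring, log_inv]
  have hquot : HasDerivAt (fun z => z / (z - 1)) (-1 / (y - 1) ^ 2) y := by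
    refine ((hasDerivAt_id' y).div ((hasDerivAt_id' y).sub_const 1) hy1).congr_deriv ?_
    ring
  have := ((hasDerivAt_Li2 h0.ne' (by rw [abs_lt]; constructor <;> linarith)).add
    ((hasDerivAt_Li2 hq0 hq).comp y hquot)).add
    ((((hasDerivAt_id y).const_sub 1).log h1y).pow 2 |>.div_const 2)
  refine this.congr_deriv ?_
  simp only [id, hlog]
  field_simp
  ring

theorem Li2_add_Li2_div_sub_one {x : ℝ} (h0 : 0 ≤ x) (h1 : x ≤ 1 / 2) :
    Li2 x + Li2 (x / (x - 1)) = -(log (1 - x) ^ 2 / 2) := by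
  rcases h0.eq_or_lt with rfl | hpos
  · simp [Li2_zero]
  obtain ⟨c, _, hc⟩ := exists_hasDerivAt_eq_slope _ (fun _ => 0) hpos
    (continuousOn_landen.mono (Icc_subset_Icc le_rfl h1))
    fun y hy => hasDerivAt_landen hy.1 (hy.2.trans_le h1)
  rw [eq_comm, div_eq_zero_iff, sub_eq_zero] at hc
  simp [Li2_zero, hpos.ne'] at hc
  linarith

theorem Li2_inv_add_one_add_Li2_neg_inv {n : ℝ} (hn : 1 ≤ n) :
    Li2 (1 / (n + 1)) + Li2 (-(1 / n)) = -((log (n + 1) - log n) ^ 2 / 2) := by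
  have hn0 : n ≠ 0 := by positivity
  have hn1 : n + 1 ≠ 0 := by positivity
  have hx : 1 / (n + 1) / (1 / (n + 1) - 1) = -(1 / n) := by
    rw [div_sub_one hn1, div_div_div_cancel_right₀ hn1]; ring
  have hlog : log (1 - 1 / (n + 1)) = log n - log (n + 1) := by
    rw [← log_div hn0 hn1]; congr 1; field_simp; ring
  have := Li2_add_Li2_div_sub_one (x := 1 / (n + 1)) (by positivity)
    (by rw [div_le_div_iff₀ (by positivity) two_pos]; linarith)
  rw [hx, hlog] at this
  rw [this]
  ring

theorem pi_sq_li2_combination :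
    Real.pi ^ 2 = 36 * Li2 (1 / 2) - 36 * Li2 (1 / 4) - 12 * Li2 (1 / 8) + 6 * Li2 (1 / 64) := by
  have log4 : log 4 = 2 * log 2 := by rw [show (4 : ℝ) = 2 ^ 2 by norm_num, log_pow]; norm_num
  have log8 : log 8 = 3 * log 2 := by rw [show (8 : ℝ) = 2 ^ 3 by norm_num, log_pow]; norm_num
  have log9 : log 9 = 2 * log 3 := by rw [show (9 : ℝ) = 3 ^ 2 by norm_num, log_pow]; norm_num
  have landen₂ := Li2_inv_add_one_add_Li2_neg_inv (n := 1) le_rfl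
  have landen₃ := Li2_inv_add_one_add_Li2_neg_inv (n := 2) (by norm_num)
  have landen₄ := Li2_inv_add_one_add_Li2_neg_inv (n := 3) (by norm_num)
  have landen₉ := Li2_inv_add_one_add_Li2_neg_inv (n := 8) (by norm_num)
  have sq₂ := Li2_sq (x := 1 / 2) (by norm_num [abs_of_pos])
  have sq₃ := Li2_sq (x := 1 / 3) (by norm_num [abs_of_pos])
  have sq₈ := Li2_sq (x := 1 / 8) (by norm_num [abs_of_pos])
  norm_num [log4, log8, log9] at landen₂ landen₃ landen₄ landen₉ sq₂ sq₃ sq₈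
  linear_combination 12 * Li2_neg_one - 12 * landen₂ + 24 * landen₃ + 24 * landen₄ - 12 * landen₉
    + 12 * sq₂ + 12 * sq₃ - 6 * sq₈
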